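/- Let Σ be an alphabet and let Γ = Σ ∪ {#} with # ∉ Σ. For a ∈ Σ let subst_a : Γ* → Γ* replace every occurrence of # by #·a. Define two step functions on pairs of Γ-words: step_a(R, S) = ( #·a·S·subst_a(R), a·S ) and step'_a(R, S) = ( subst_a(R)·#·a·S, a·S ). Then the two register transducers with substitution defined by these updates (both starting from (ε, ε) and outputting the first register) are equivalent: for every word w ∈ Σ*, the first components of the two left-to-right folds over w coincide. -/
import Mathlib


/-- The alphabet Γ = Σ ∪ {#} is modelled as `Option A`, with `none` playing the
role of # and `some a` the role of a letter a ∈ Σ.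
`substHash a` replaces every occurrence of # by #·a, leaving letters of Σ
unchanged. -/
def substHash {A : Type*} (a : A) (R : List (Option A)) : List (Option A) :=
  R.flatMap fun c =>
    match c with
    | none => [none, some a]
    | some b => [some b]

/-- step_a(R, S) = ( #·a·S·subst_a(R), a·S ). -/
def stepFst {A : Type*} (a : A) (RS : List (Option A) × List (Option A)) :
    List (Option A) × List (Option A) :=
  (none :: some a :: RS.2 ++ substHash a RS.1, some a :: RS.2)

/-- step'_a(R, S) = ( subst_a(R)·#·a·S, a·S ). -/
def stepSnd {A : Type*} (a : A) (RS : List (Option A) × List (Option A)) :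
    List (Option A) × List (Option A) :=
  (substHash a RS.1 ++ none :: some a :: RS.2, some a :: RS.2)

lemma substHash_map_some {A : Type*} (a : A) (T : List A) :
    substHash a (T.map some) = T.map some := by
  induction T with
  | nil => rfl
  | cons b T ih => simp [substHash, List.flatMap] at ih ⊢; simpa [substHash] using ih

lemma substHash_append {A : Type*} (a : A) (X Y : List (Option A)) :
    substHash a (X ++ Y) = substHash a X ++ substHash a Y := by
  simp [substHash]

lemma substHash_block {A : Type*} (a : A) (n : ℕ) (T : List A) :
    substHash a ((List.replicate n (none :: T.map some)).flatten) =
      (List.replicate n (none :: some a :: T.map some)).flatten := by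
  induction n with
  | zero => rfl
  | succ n ih =>
      simp only [List.replicate_succ, List.flatten_cons, substHash_append, ih]
      congr 1
      simpa [substHash] using substHash_map_some a T

lemma key {A : Type*} (w : List A) : ∀ (n : ℕ) (T : List A),
    w.foldl (fun RS a => stepFst a RS)
        ((List.replicate n (none :: T.map some)).flatten, T.map some) =
      ((List.replicate (n + w.length) (none :: (w.reverse.map some ++ T.map some))).flatten,
        w.reverse.map some ++ T.map some) ∧
    w.foldl (fun RS a => stepSnd a RS)
        ((List.replicate n (none :: T.map some)).flatten, T.map some) =
      ((List.replicate (n + w.length) (none :: (w.reverse.map some ++ T.map some))).flatten,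
        w.reverse.map some ++ T.map some) := by
  induction w with
  | nil => simp
  | cons a v ih =>
      intro n T
      have h1 : stepFst a ((List.replicate n (none :: T.map some)).flatten, T.map some) =
          ((List.replicate (n+1) (none :: (a :: T).map some)).flatten, (a :: T).map some) := by
        simp [stepFst, substHash_block, List.replicate_succ]
      have h2 : stepSnd a ((List.replicate n (none :: T.map some)).flatten, T.map some) =
          ((List.replicate (n+1) (none :: (a :: T).map some)).flatten, (a :: T).map some) := by
        simp [stepSnd, substHash_block, List.replicate_succ']
      obtain ⟨g1, g2⟩ := ih (n+1) (a :: T)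
      constructor
      · simp only [List.foldl_cons, h1, g1]
        simp [List.length_cons]; ring_nf
      · simp only [List.foldl_cons, h2, g2]
        simp [List.length_cons]; ring_nf

/-- the two register transducers with substitution are
equivalent: on every input word the first components of the two folds agree. -/
theorem stmt_16 {A : Type*} (w : List A) :
    (w.foldl (fun RS a => stepFst a RS) ([], [])).1 =
      (w.foldl (fun RS a => stepSnd a RS) ([], [])).1 := by
  have := key w 0 []
  simp at this
  rw [this.1, this.2]
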